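/- The function W : (ℂ∖{0})² → ℂ defined by W(y_1, y_2) = 3y_1 + y_2 + 2·y_1^{−1}y_2 + y_1^{−1} + y_2^{−1} + 4·y_1 y_2^{−1} + y_1^{2} y_2^{−1} has exactly 7 critical points, and each of these critical points is nondegenerate. -/

import Mathlib

open Polynomial

/-- The potential function of the monotone fiber `L(1.5,2)` in `X̂₇` with the chosen bulk deformation (energy factor dropped). -/
noncomputable def W : ℂ → ℂ → ℂ := fun y₁ y₂ =>
  3 * y₁ + y₂ + 2 * y₁⁻¹ * y₂ + y₁⁻¹ + y₂⁻¹ + 4 * y₁ * y₂⁻¹ + y₁ ^ 2 * y₂⁻¹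

/-- A point of `(ℂ∖{0})²` is a critical point of `W` if both partial
derivatives of `W` vanish there. -/
def IsCritPt (p : ℂ × ℂ) : Prop :=
  p.1 ≠ 0 ∧ p.2 ≠ 0 ∧
    deriv (fun z => W z p.2) p.1 = 0 ∧ deriv (fun z => W p.1 z) p.2 = 0

/-- The Hessian determinant
`(∂²W/∂y₁²)(∂²W/∂y₂²) - (∂²W/∂y₁∂y₂)²` of `W` at a point. -/
noncomputable def hessDet (p : ℂ × ℂ) : ℂ :=
  deriv (deriv (fun z => W z p.2)) p.1 * deriv (deriv (fun z => W p.1 z)) p.2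
    - (deriv (fun w => deriv (fun z => W z w) p.1) p.2) ^ 2

/-!
Clearing denominators, the critical equations of `W` at `(x, y)` read `g₁ = 0` and `g₂ = 0`
with `g₁ = 3x²y - 2y² - y + 4x² + 2x³` and `g₂ = xy² + 2y² - x - 4x² - x³`, and
`(x + 2) g₁ + 2 g₂ = D(x) y + N(x)` is linear in `y`, where `D = (x + 2)(3x² - 1)` and
`N = 2x⁴ + 6x³ - 2x`. Substituting `y = -N/D` into `g₁` leaves `2x P(x)/D²` for a polynomial
`P` of degree 7, so the critical points are the pairs `(a, -N(a)/D(a))` with `P(a) = 0`. Since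
`P` and `P'` are coprime, there are exactly 7 of them. At a critical point the Hessian
determinant equals `x² y P'(x) / (D(x) x⁴ y⁴)`, which is nonzero for the same reason.
-/

theorem hasDerivAt_inv_sq {𝕜 : Type*} [NontriviallyNormedField 𝕜] {x : 𝕜} (hx : x ≠ 0) :
    HasDerivAt (fun z => (z ^ 2)⁻¹) (-2 * (x ^ 3)⁻¹) x := by
  refine ((hasDerivAt_pow 2 x).inv (pow_ne_zero 2 hx)).congr_deriv ?_
  field_simp
  ring

theorem Polynomial.ncard_setOf_isRoot_eq_natDegree {K : Type*} [Field K] [IsAlgClosed K]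
    {p : K[X]} (hp : ∀ a, p.IsRoot a → p.derivative.eval a ≠ 0) :
    {a | p.IsRoot a}.ncard = p.natDegree := by
  classical
  have hsep : p.Separable := by
    rw [separable_def, isCoprime_iff_aeval_ne_zero_of_isAlgClosed K K]
    intro a
    simp only [coe_aeval_eq_eval]
    exact or_iff_not_imp_left.2 fun h => hp a (not_not.1 h)
  have hroots : {a | p.IsRoot a} = p.roots.toFinset := by
    ext a
    simp [hsep.ne_zero]
  rw [hroots, Set.ncard_coe_finset, Multiset.toFinset_card_of_nodup (nodup_roots hsep),
    IsAlgClosed.card_roots_eq_natDegree]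

theorem hasDerivAt_W_fst (y : ℂ) {x : ℂ} (hx : x ≠ 0) :
    HasDerivAt (fun z => W z y) (3 - (2 * y + 1) * (x ^ 2)⁻¹ + (4 + 2 * x) * y⁻¹) x := by
  have hinv := hasDerivAt_inv hx
  have hid := hasDerivAt_id' x
  refine (((((((hid.const_mul 3).add_const y).add ((hinv.const_mul 2).mul_const y)).add
    hinv).add_const y⁻¹).add ((hid.const_mul 4).mul_const y⁻¹)).add
    ((hasDerivAt_pow 2 x).mul_const y⁻¹)).congr_deriv ?_
  ring

theorem hasDerivAt_W_snd (x : ℂ) {y : ℂ} (hy : y ≠ 0) :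
    HasDerivAt (fun z => W x z) (1 + 2 * x⁻¹ - (1 + 4 * x + x ^ 2) * (y ^ 2)⁻¹) y := by
  have hinv := hasDerivAt_inv hy
  have hid := hasDerivAt_id' y
  refine (((((((hid.const_add (3 * x)).add (hid.const_mul (2 * x⁻¹))).add_const x⁻¹).add
    hinv).add (hinv.const_mul (4 * x))).add (hinv.const_mul (x ^ 2)))).congr_deriv ?_
  ring

theorem deriv_deriv_W_fst (y : ℂ) {x : ℂ} (hx : x ≠ 0) :
    deriv (deriv fun z => W z y) x = 2 * (2 * y + 1) * (x ^ 3)⁻¹ + 2 * y⁻¹ := by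
  have hW : deriv (fun z => W z y) =ᶠ[nhds x]
      fun z => 3 - (2 * y + 1) * (z ^ 2)⁻¹ + (4 + 2 * z) * y⁻¹ := by
    filter_upwards [eventually_ne_nhds hx] with z hz using (hasDerivAt_W_fst y hz).deriv
  rw [hW.deriv_eq]
  exact (((((hasDerivAt_inv_sq hx).const_mul (2 * y + 1)).const_sub 3).add
    ((((hasDerivAt_id' x).const_mul 2).const_add 4).mul_const y⁻¹)).congr_deriv (by ring)).deriv

theorem deriv_deriv_W_snd (x : ℂ) {y : ℂ} (hy : y ≠ 0) :
    deriv (deriv fun z => W x z) y = 2 * (1 + 4 * x + x ^ 2) * (y ^ 3)⁻¹ := by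
  have hW : deriv (fun z => W x z) =ᶠ[nhds y]
      fun z => 1 + 2 * x⁻¹ - (1 + 4 * x + x ^ 2) * (z ^ 2)⁻¹ := by
    filter_upwards [eventually_ne_nhds hy] with z hz using (hasDerivAt_W_snd x hz).deriv
  rw [hW.deriv_eq, (((hasDerivAt_inv_sq hy).const_mul _).const_sub _).deriv]
  ring

theorem deriv_deriv_W_fst_snd {x y : ℂ} (hx : x ≠ 0) (hy : y ≠ 0) :
    deriv (fun w => deriv (fun z => W z w) x) y
      = -2 * (x ^ 2)⁻¹ - (4 + 2 * x) * (y ^ 2)⁻¹ := by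
  have hW : (fun w => deriv (fun z => W z w) x)
      = fun w => 3 - (2 * w + 1) * (x ^ 2)⁻¹ + (4 + 2 * x) * w⁻¹ :=
    funext fun w => (hasDerivAt_W_fst w hx).deriv
  rw [hW]
  exact (((((((hasDerivAt_id' y).const_mul 2).add_const 1).mul_const (x ^ 2)⁻¹).const_sub 3).add
    ((hasDerivAt_inv hy).const_mul (4 + 2 * x))).congr_deriv (by ring)).deriv

theorem hessDet_eq {x y : ℂ} (hx : x ≠ 0) (hy : y ≠ 0) :
    hessDet (x, y) = (-12 * x ^ 4 + (4 * x + 16 * x ^ 2 + 4 * x ^ 3) * y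
      + (8 * x + 16 * x ^ 2) * y ^ 2 - 4 * y ^ 4) / (x ^ 4 * y ^ 4) := by
  rw [hessDet, deriv_deriv_W_fst y hx, deriv_deriv_W_snd x hy, deriv_deriv_W_fst_snd hx hy]
  field_simp
  ring

theorem isCritPt_iff {x y : ℂ} : IsCritPt (x, y) ↔ x ≠ 0 ∧ y ≠ 0 ∧
    3 * x ^ 2 * y - 2 * y ^ 2 - y + 4 * x ^ 2 + 2 * x ^ 3 = 0 ∧
    x * y ^ 2 + 2 * y ^ 2 - x - 4 * x ^ 2 - x ^ 3 = 0 := by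
  refine and_congr_right fun hx => and_congr_right fun hy => ?_
  have h₁ : 3 - (2 * y + 1) * (x ^ 2)⁻¹ + (4 + 2 * x) * y⁻¹
      = (3 * x ^ 2 * y - 2 * y ^ 2 - y + 4 * x ^ 2 + 2 * x ^ 3) / (x ^ 2 * y) := by
    field_simp
    ring
  have h₂ : 1 + 2 * x⁻¹ - (1 + 4 * x + x ^ 2) * (y ^ 2)⁻¹
      = (x * y ^ 2 + 2 * y ^ 2 - x - 4 * x ^ 2 - x ^ 3) / (x * y ^ 2) := by
    field_simp
    ring
  rw [(hasDerivAt_W_fst y hx).deriv, (hasDerivAt_W_snd x hy).deriv, h₁, h₂, div_eq_zero_iff,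
    div_eq_zero_iff]
  simp [hx, hy]

noncomputable def critPoly : ℂ[X] :=
  5 * X ^ 7 + 30 * X ^ 6 + 39 * X ^ 5 - 10 * X ^ 4 - 29 * X ^ 3 - 6 * X ^ 2 + 5 * X + 2

theorem eval_critPoly (a : ℂ) :
    critPoly.eval a = 5 * a ^ 7 + 30 * a ^ 6 + 39 * a ^ 5 - 10 * a ^ 4 - 29 * a ^ 3
      - 6 * a ^ 2 + 5 * a + 2 := by
  simp [critPoly]

theorem eval_derivative_critPoly (a : ℂ) :
    critPoly.derivative.eval a = 35 * a ^ 6 + 180 * a ^ 5 + 195 * a ^ 4 - 40 * a ^ 3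
      - 87 * a ^ 2 - 12 * a + 5 := by
  simp only [critPoly, derivative_add, derivative_sub, derivative_mul, derivative_ofNat,
    derivative_X_pow, derivative_X, eval_add, eval_sub, eval_mul, eval_ofNat, eval_C, eval_pow,
    eval_X, eval_one, eval_zero]
  ring

theorem natDegree_critPoly : critPoly.natDegree = 7 := by
  unfold critPoly
  compute_degree!

theorem den_sq_mul_critEq_fst (x y : ℂ) :
    ((x + 2) * (3 * x ^ 2 - 1)) ^ 2 * (3 * x ^ 2 * y - 2 * y ^ 2 - y + 4 * x ^ 2 + 2 * x ^ 3)
      = 2 * x * critPoly.eval x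
        + ((x + 2) * (3 * x ^ 2 - 1) * y + (2 * x ^ 4 + 6 * x ^ 3 - 2 * x))
          * ((x + 2) * (3 * x ^ 2 - 1) * (3 * x ^ 2 - 1 - 2 * y)
            + 2 * (2 * x ^ 4 + 6 * x ^ 3 - 2 * x)) := by
  rw [eval_critPoly]
  ring

theorem ne_zero_of_isRoot_critPoly {a : ℂ} (ha : critPoly.IsRoot a) : a ≠ 0 := by
  rintro rfl
  norm_num [IsRoot, eval_critPoly] at ha

theorem den_ne_zero_of_isRoot_critPoly {a : ℂ} (ha : critPoly.IsRoot a) :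
    (a + 2) * (3 * a ^ 2 - 1) ≠ 0 := by
  rw [IsRoot, eval_critPoly] at ha
  intro h
  have : (72 : ℂ) = 0 := by
    linear_combination (265 - 1458 * a - 795 * a ^ 2) * ha + (229 - 910 * a - 4093 * a ^ 2
      - 1796 * a ^ 3 + 9455 * a ^ 4 + 7730 * a ^ 5 + 1325 * a ^ 6) * h
  norm_num at this

theorem num_ne_zero_of_isRoot_critPoly {a : ℂ} (ha : critPoly.IsRoot a) :
    2 * a ^ 4 + 6 * a ^ 3 - 2 * a ≠ 0 := by
  rw [IsRoot, eval_critPoly] at ha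
  intro h
  have : (12 : ℂ) = 0 := by
    linear_combination (6 + 140 * a - 50 * a ^ 2 - 34 * a ^ 3) * ha + (155 + 282 * a - 201 * a ^ 2
      - 994 * a ^ 3 - 77 * a ^ 4 + 380 * a ^ 5 + 85 * a ^ 6) * h
  norm_num at this

theorem eval_derivative_ne_zero_of_isRoot_critPoly {a : ℂ} (ha : critPoly.IsRoot a) :
    critPoly.derivative.eval a ≠ 0 := by
  rw [IsRoot, eval_critPoly] at ha
  rw [eval_derivative_critPoly]
  intro h
  have : (97073832 : ℂ) = 0 := by
    linear_combination (30232781 - 7348661 * a + 794319280 * a ^ 2 - 2266255535 * a ^ 3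
      - 2860725445 * a ^ 4 - 611010820 * a ^ 5) * ha + (7321654 - 9721347 * a - 170034167 * a ^ 2
      - 239945536 * a ^ 3 + 483793103 * a ^ 4 + 483492715 * a ^ 5 + 87287260 * a ^ 6) * h
  norm_num at this

noncomputable def critY (x : ℂ) : ℂ :=
  -(2 * x ^ 4 + 6 * x ^ 3 - 2 * x) / ((x + 2) * (3 * x ^ 2 - 1))

theorem IsCritPt.den_mul_add_num {x y : ℂ} (h : IsCritPt (x, y)) :
    (x + 2) * (3 * x ^ 2 - 1) * y + (2 * x ^ 4 + 6 * x ^ 3 - 2 * x) = 0 := by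
  obtain ⟨-, -, h₁, h₂⟩ := isCritPt_iff.1 h
  linear_combination (x + 2) * h₁ + 2 * h₂

theorem IsCritPt.isRoot_critPoly {x y : ℂ} (h : IsCritPt (x, y)) : critPoly.IsRoot x := by
  obtain ⟨hx, -, h₁, -⟩ := isCritPt_iff.1 h
  have helim := den_sq_mul_critEq_fst x y
  rw [h₁, h.den_mul_add_num, mul_zero, zero_mul, add_zero, eq_comm, mul_eq_zero] at helim
  exact helim.resolve_left (mul_ne_zero two_ne_zero hx)

theorem isCritPt_critY {a : ℂ} (ha : critPoly.IsRoot a) : IsCritPt (a, critY a) := by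
  have hD := den_ne_zero_of_isRoot_critPoly ha
  have hl : (a + 2) * (3 * a ^ 2 - 1) * critY a + (2 * a ^ 4 + 6 * a ^ 3 - 2 * a) = 0 := by
    rw [critY, mul_div_cancel₀ _ hD, neg_add_cancel]
  have h₁ : 3 * a ^ 2 * critY a - 2 * critY a ^ 2 - critY a + 4 * a ^ 2 + 2 * a ^ 3 = 0 := by
    have helim := den_sq_mul_critEq_fst a (critY a)
    rw [ha.eq_zero, hl, mul_zero, zero_mul, add_zero, mul_eq_zero] at helim
    exact helim.resolve_left (pow_ne_zero 2 hD)
  refine isCritPt_iff.2 ⟨ne_zero_of_isRoot_critPoly ha, ?_, h₁, ?_⟩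
  · exact div_ne_zero (neg_ne_zero.2 (num_ne_zero_of_isRoot_critPoly ha)) hD
  · linear_combination (hl - (a + 2) * h₁) / 2

theorem setOf_isCritPt :
    {p | IsCritPt p} = (fun a => (a, critY a)) '' {a | critPoly.IsRoot a} := by
  ext ⟨x, y⟩
  refine ⟨fun h => ⟨x, h.isRoot_critPoly, Prod.ext rfl ?_⟩, ?_⟩
  · show critY x = y
    rw [critY, div_eq_iff (den_ne_zero_of_isRoot_critPoly h.isRoot_critPoly)]
    linear_combination -h.den_mul_add_num
  · rintro ⟨a, ha, he⟩
    exact he ▸ isCritPt_critY ha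

/-- The Hessian numerator is `x y` times the Jacobian determinant of `(g₁, g₂)`; on the critical
locus this Jacobian is `x P'(x) / D(x)`, as one sees by differentiating `den_sq_mul_critEq_fst`. -/
theorem IsCritPt.den_mul_hessNum {x y : ℂ} (h : IsCritPt (x, y)) :
    (x + 2) * (3 * x ^ 2 - 1) * (-12 * x ^ 4 + (4 * x + 16 * x ^ 2 + 4 * x ^ 3) * y
      + (8 * x + 16 * x ^ 2) * y ^ 2 - 4 * y ^ 4) = x ^ 2 * y * critPoly.derivative.eval x := by
  obtain ⟨-, -, h₁, -⟩ := isCritPt_iff.1 h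
  have hP := h.isRoot_critPoly
  have hD := den_ne_zero_of_isRoot_critPoly hP
  rw [IsRoot, eval_critPoly] at hP
  rw [eval_derivative_critPoly]
  refine mul_left_cancel₀ hD ?_
  linear_combination ((x + 2) * (3 * x ^ 2 - 1)) ^ 2
      * ((1 - 8 * x - 14 * x ^ 2 + 4 * x ^ 3 + 9 * x ^ 4) / 2 + (3 * x ^ 2 - 1) * y + 2 * y ^ 2)
      * h₁
    + (-1 - x / 2 - 25 * x ^ 2 - 38 * x ^ 3 + 109 * x ^ 4 + 205 * x ^ 5 - 15 * x ^ 6 - 198 * x ^ 7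
      - 152 * x ^ 8 - 81 * x ^ 9 / 2) * h.den_mul_add_num
    + (-x - 2 * x ^ 2 + 6 * x ^ 3 + 30 * x ^ 4 + 5 * x ^ 5) * hP

theorem IsCritPt.hessDet_ne_zero {x y : ℂ} (h : IsCritPt (x, y)) : hessDet (x, y) ≠ 0 := by
  obtain ⟨hx, hy, -⟩ := isCritPt_iff.1 h
  have hP' := eval_derivative_ne_zero_of_isRoot_critPoly h.isRoot_critPoly
  rw [hessDet_eq hx hy]
  refine div_ne_zero (right_ne_zero_of_mul (a := (x + 2) * (3 * x ^ 2 - 1)) ?_) (by positivity)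
  rw [h.den_mul_hessNum]
  positivity

/-- `W` has exactly 7 critical points in `(ℂ∖{0})²`, and each of them is
nondegenerate (nonvanishing Hessian determinant). -/
theorem W_critical_points :
    {p : ℂ × ℂ | IsCritPt p}.ncard = 7 ∧
      ∀ p : ℂ × ℂ, IsCritPt p → hessDet p ≠ 0 := by
  refine ⟨?_, fun ⟨x, y⟩ h => h.hessDet_ne_zero⟩
  rw [setOf_isCritPt, Set.ncard_image_of_injective _ fun a b hab => congrArg Prod.fst hab,
    ncard_setOf_isRoot_eq_natDegree fun a ha => eval_derivative_ne_zero_of_isRoot_critPoly ha,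
    natDegree_critPoly]
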